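/- arXiv:1902.00395 — 4 statements merged into one kernel-verified Lean document; each statement's English description precedes it below -/
import Mathlib

section
/- For all real numbers ξ, η and every real exponent p ≥ 2, one has |ξ⁺ - η⁺|^p ≤ |ξ - η|^{p-2}(ξ - η)(ξ⁺ - η⁺), where ξ⁺ = max(ξ,0) denotes the positive part. -/
theorem stmt_0 (ξ η p : ℝ) (hp : 2 ≤ p) :
    |max ξ 0 - max η 0| ^ p ≤ |ξ - η| ^ (p - 2) * (ξ - η) * (max ξ 0 - max η 0) := by
  set a := max ξ 0 - max η 0 with ha
  set d := ξ - η with hd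
  have hda : d - a = min ξ 0 - min η 0 := by
    have h1 := min_add_max ξ 0
    have h2 := min_add_max η 0
    rw [ha, hd]; linarith
  have had : a ^ 2 ≤ a * d := by
    have : 0 ≤ a * (d - a) := by
      rcases le_total ξ η with h | h
      · have h1 : a ≤ 0 := by
          have := max_le_max h (le_refl (0:ℝ)); rw [ha]; linarith
        have h2 : d - a ≤ 0 := by
          have := min_le_min h (le_refl (0:ℝ)); rw [hda]; linarith
        nlinarith
      · have h1 : 0 ≤ a := by
          have := max_le_max h (le_refl (0:ℝ)); rw [ha]; linarith
        have h2 : 0 ≤ d - a := by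
          have := min_le_min h (le_refl (0:ℝ)); rw [hda]; linarith
        exact mul_nonneg h1 h2
    nlinarith
  have habs : |a| ≤ |d| := abs_max_sub_max_le_abs ξ η 0
  rcases eq_or_ne a 0 with h0 | h0
  · rw [h0, abs_zero, Real.zero_rpow (by linarith), mul_zero]
  · have hapos : 0 < |a| := abs_pos.mpr h0
    have key : |a| ^ p = |a| ^ (p - 2) * a ^ 2 := by
      have h2 : |a| ^ (2:ℝ) = a ^ 2 := by rw [Real.rpow_two, sq_abs]
      rw [← h2, ← Real.rpow_add hapos]
      norm_num
    rw [key]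
    have h1 : |a| ^ (p - 2) * a ^ 2 ≤ |a| ^ (p - 2) * (a * d) :=
      mul_le_mul_of_nonneg_left had (Real.rpow_nonneg (abs_nonneg a) _)
    have h2 : |a| ^ (p - 2) * (a * d) ≤ |d| ^ (p - 2) * (a * d) := by
      have hsq : (0:ℝ) < a ^ 2 := by positivity
      have hadpos : 0 ≤ a * d := le_trans (le_of_lt hsq) had
      exact mul_le_mul_of_nonneg_right
        (Real.rpow_le_rpow (abs_nonneg a) habs (by linarith)) hadpos
    calc |a| ^ (p - 2) * a ^ 2 ≤ |d| ^ (p - 2) * (a * d) := le_trans h1 h2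
      _ = |d| ^ (p - 2) * d * a := by ring
end

section
/- For all real numbers a, b ≥ 0 and every real exponent γ ≥ 1, one has a^γ - |a-b|^{γ-1}(a-b) ≥ 2^{1-γ} b^γ. -/
lemma real_rpow_super (x y p : ℝ) (hx : 0 ≤ x) (hy : 0 ≤ y) (hp : 1 ≤ p) :
    x ^ p + y ^ p ≤ (x + y) ^ p := by
  have := NNReal.add_rpow_le_rpow_add ⟨x, hx⟩ ⟨y, hy⟩ hp
  exact_mod_cast this

lemma real_rpow_conv (x y p : ℝ) (hx : 0 ≤ x) (hy : 0 ≤ y) (hp : 1 ≤ p) :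
    (x + y) ^ p ≤ 2 ^ (p - 1) * (x ^ p + y ^ p) := by
  have := NNReal.rpow_add_le_mul_rpow_add_rpow ⟨x, hx⟩ ⟨y, hy⟩ hp
  exact_mod_cast this

theorem stmt_1 (a b γ : ℝ) (ha : 0 ≤ a) (hb : 0 ≤ b) (hγ : 1 ≤ γ) :
    a ^ γ - |a - b| ^ (γ - 1) * (a - b) ≥ 2 ^ (1 - γ) * b ^ γ := by
  have hγ0 : γ ≠ 0 := by linarith
  rcases le_or_gt b a with h | h
  · have habs : |a - b| = a - b := abs_of_nonneg (by linarith)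
    have hpow : (a - b) ^ (γ - 1) * (a - b) = (a - b) ^ γ := by
      rw [show (a - b) ^ (γ - 1) * (a - b) = (a - b) ^ (γ - 1) * (a - b) ^ (1 : ℝ) by
        rw [Real.rpow_one], ← Real.rpow_add' (by linarith) (by simpa using hγ0)]
      ring_nf
    rw [habs, hpow]
    have h1 : (a - b) ^ γ + b ^ γ ≤ a ^ γ := by
      have := real_rpow_super (a - b) b γ (by linarith) hb hγ
      simpa using this
    have h2 : (2 : ℝ) ^ (1 - γ) ≤ 1 :=
      Real.rpow_le_one_of_one_le_of_nonpos one_le_two (by linarith)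
    have h3 : 2 ^ (1 - γ) * b ^ γ ≤ b ^ γ := by
      nth_rewrite 2 [← one_mul (b ^ γ)]
      exact mul_le_mul_of_nonneg_right h2 (Real.rpow_nonneg hb γ)
    linarith
  · have habs : |a - b| = b - a := by rw [abs_of_neg (by linarith)]; ring
    have hpow : (b - a) ^ (γ - 1) * (a - b) = -((b - a) ^ γ) := by
      have : (b - a) ^ (γ - 1) * (b - a) = (b - a) ^ γ := by
        rw [show (b - a) ^ (γ - 1) * (b - a) = (b - a) ^ (γ - 1) * (b - a) ^ (1 : ℝ) by
          rw [Real.rpow_one], ← Real.rpow_add' (by linarith) (by simpa using hγ0)]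
        ring_nf
      nlinarith [this]
    rw [habs, hpow]
    have h1 : b ^ γ ≤ 2 ^ (γ - 1) * (a ^ γ + (b - a) ^ γ) := by
      have := real_rpow_conv a (b - a) γ ha (by linarith) hγ
      simpa using this
    have h2 : (0 : ℝ) < 2 ^ (1 - γ) := Real.rpow_pos_of_pos two_pos _
    have key : 2 ^ (1 - γ) * b ^ γ ≤ a ^ γ + (b - a) ^ γ := by
      have := mul_le_mul_of_nonneg_left h1 h2.le
      rwa [← mul_assoc, ← Real.rpow_add two_pos, show 1 - γ + (γ - 1) = 0 by ring,
        Real.rpow_zero, one_mul] at this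
    linarith
end

section
/- For every real exponent l ≥ 2 and all real numbers a, b, one has |a-b|^l ≤ 2^{l-2}(|a|^{l-2}a - |b|^{l-2}b)(a-b). -/
open Real

lemma h1 (p x y : ℝ) (hx : 0 ≤ x) (hy : 0 ≤ y) (hp : 1 ≤ p) :
    (x + y) ^ p ≤ 2 ^ (p - 1) * (x ^ p + y ^ p) := by
  lift x to NNReal using hx
  lift y to NNReal using hy
  exact_mod_cast NNReal.rpow_add_le_mul_rpow_add_rpow x y hp

lemma h2 (p x y : ℝ) (hx : 0 ≤ x) (hy : 0 ≤ y) (hp : 1 ≤ p) :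
    x ^ p + y ^ p ≤ (x + y) ^ p := by
  lift x to NNReal using hx
  lift y to NNReal using hy
  exact_mod_cast NNReal.add_rpow_le_rpow_add x y hp

lemma hphi (l x : ℝ) (hl : 2 ≤ l) (hx : 0 ≤ x) : |x| ^ (l - 2) * x = x ^ (l - 1) := by
  rcases eq_or_lt_of_le hx with rfl | hx'
  · simp [Real.zero_rpow (by linarith : l - 1 ≠ 0)]
  · rw [abs_of_pos hx', ← Real.rpow_add_one hx'.ne', show l - 2 + 1 = l - 1 by ring]

lemma key (l x y : ℝ) (hl : 2 ≤ l) (hs : 0 ≤ x + y) :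
    (x + y) ^ (l - 1) ≤ 2 ^ (l - 2) * (|x| ^ (l - 2) * x + |y| ^ (l - 2) * y) := by
  have hl1 : (1:ℝ) ≤ l - 1 := by linarith
  rcases le_or_gt 0 x with hx | hx <;> rcases le_or_gt 0 y with hy | hy
  · -- both nonneg
    rw [hphi l x hl hx, hphi l y hl hy]
    have h := h1 (l - 1) x y hx hy hl1
    rwa [show l - 1 - 1 = l - 2 by ring] at h
  ·
    have hv : (0:ℝ) ≤ -y := by linarith
    rw [hphi l x hl hx]
    have hy' : |y| ^ (l - 2) * y = -((-y) ^ (l - 1)) := by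
      rw [← hphi l (-y) hl hv, abs_neg]; ring
    rw [hy']
    have h2' := h2 (l-1) (x+y) (-y) hs hv hl1
    have hone : (1:ℝ) ≤ 2 ^ (l-2) := Real.one_le_rpow (by norm_num) (by linarith)
    rw [show x + y + -y = x by ring] at h2'
    have hpos : (0:ℝ) ≤ x ^ (l-1) - (-y)^(l-1) := by
      nlinarith [Real.rpow_nonneg hs (l-1)]
    nlinarith [mul_le_mul_of_nonneg_right hone hpos]
  · -- y ≥ 0 > x : symmetric
    have hv : (0:ℝ) ≤ -x := by linarith
    rw [hphi l y hl hy]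
    have hx' : |x| ^ (l - 2) * x = -((-x) ^ (l - 1)) := by
      rw [← hphi l (-x) hl hv, abs_neg]; ring
    rw [hx']
    have h2' := h2 (l-1) (x+y) (-x) hs hv hl1
    have hone : (1:ℝ) ≤ 2 ^ (l-2) := Real.one_le_rpow (by norm_num) (by linarith)
    rw [show x + y + -x = y by ring] at h2'
    have hpos : (0:ℝ) ≤ y ^ (l-1) - (-x)^(l-1) := by
      nlinarith [Real.rpow_nonneg hs (l-1)]
    nlinarith [mul_le_mul_of_nonneg_right hone hpos]
  · linarith

lemma main_half (l a b : ℝ) (hl : 2 ≤ l) (hba : b ≤ a) :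
    |a - b| ^ l ≤ 2 ^ (l - 2) * (|a| ^ (l - 2) * a - |b| ^ (l - 2) * b) * (a - b) := by
  rcases eq_or_lt_of_le hba with rfl | hlt
  · simp [Real.zero_rpow (by linarith : l ≠ 0)]
  have hd : 0 < a - b := by linarith
  have hk := key l a (-b) hl (by linarith)
  rw [show a + -b = a - b by ring, abs_neg] at hk
  have hk' : (a - b) ^ (l - 1) ≤ 2 ^ (l - 2) * (|a| ^ (l - 2) * a - |b| ^ (l - 2) * b) := by
    calc (a - b) ^ (l - 1) ≤ 2 ^ (l-2) * (|a| ^ (l-2) * a + |b| ^ (l-2) * -b) := hk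
      _ = 2 ^ (l - 2) * (|a| ^ (l - 2) * a - |b| ^ (l - 2) * b) := by ring
  have := mul_le_mul_of_nonneg_right hk' hd.le
  rw [← Real.rpow_add_one hd.ne', show l - 1 + 1 = l by ring] at this
  rwa [abs_of_pos hd]

theorem stmt_4 (l a b : ℝ) (hl : 2 ≤ l) :
    |a - b| ^ l ≤ 2 ^ (l - 2) * (|a| ^ (l - 2) * a - |b| ^ (l - 2) * b) * (a - b) := by
  rcases le_total b a with h | h
  · exact main_half l a b hl h
  · have := main_half l b a hl h
    rw [abs_sub_comm b a] at this
    calc |a - b| ^ l ≤ 2 ^ (l-2) * (|b| ^ (l-2) * b - |a| ^ (l-2) * a) * (b - a) := this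
      _ = 2 ^ (l - 2) * (|a| ^ (l - 2) * a - |b| ^ (l - 2) * b) * (a - b) := by ring
end

section
/- For every real exponent m with 1 < m < 2, there exists a constant C_m > 0 such that for all real numbers a, b, |a-b|^m ≤ C_m ((|a|^{m-2}a - |b|^{m-2}b)(a-b))^{m/2} (|a|^m + |b|^m)^{(2-m)/2}. -/
/-!
Write `D(a, b) = (|a|^(m-2) a - |b|^(m-2) b)(a - b)`. Scaling by the larger of `|a|, |b|`
reduces the lower bound `(m - 1) (a - b)² max(|a|, |b|)^(m-2) ≤ D(a, b)` to a one-variable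
inequality on `[-1, 1]`, which is Bernoulli's inequality for the concave power `t ↦ t^(m-1)`.
The theorem is then the interpolation
`|a - b|^m = ((a - b)² M^(m-2))^(m/2) (M^m)^((2-m)/2)` with `M = max(|a|, |b|)`,
together with `M^m ≤ |a|^m + |b|^m`.
-/

open Real

lemma mul_one_sub_le_one_sub_abs_rpow_mul_self {m t : ℝ} (hm1 : 1 < m) (hm2 : m ≤ 2)
    (ht1 : -1 ≤ t) (ht2 : t ≤ 1) :
    (m - 1) * (1 - t) ≤ 1 - |t| ^ (m - 2) * t := by
  rcases lt_trichotomy t 0 with ht | rfl | ht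
  · have hsigned : |t| ^ (m - 2) * t = -(-t) ^ (m - 1) := by
      rw [abs_of_neg ht, show m - 1 = m - 2 + 1 by ring, rpow_add_one (neg_ne_zero.2 ht.ne)]
      ring
    have hpow : -t ≤ (-t) ^ (m - 1) :=
      self_le_rpow_of_le_one (by linarith) (by linarith) (by linarith)
    rw [hsigned]
    nlinarith
  · simp only [mul_zero, sub_zero]
    linarith
  · have hsigned : |t| ^ (m - 2) * t = t ^ (m - 1) := by
      rw [abs_of_pos ht, show m - 1 = m - 2 + 1 by ring, rpow_add_one ht.ne']
    have hbernoulli : t ^ (m - 1) ≤ 1 + (m - 1) * (t - 1) := by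
      simpa using rpow_one_add_le_one_add_mul_self (s := t - 1) (by linarith)
        (p := m - 1) (by linarith) (by linarith)
    rw [hsigned]
    linarith

lemma mul_sq_mul_abs_rpow_le_of_abs_le {m a b : ℝ} (hm1 : 1 < m) (hm2 : m ≤ 2)
    (hba : |b| ≤ |a|) :
    (m - 1) * (a - b) ^ 2 * |a| ^ (m - 2)
      ≤ (|a| ^ (m - 2) * a - |b| ^ (m - 2) * b) * (a - b) := by
  rcases eq_or_ne a 0 with rfl | ha
  · obtain rfl : b = 0 := abs_nonpos_iff.1 (by simpa using hba)
    simp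
  set t := b / a
  have hb : b = t * a := (div_mul_cancel₀ b ha).symm
  have ht : |t| ≤ 1 := by
    rw [abs_div]
    exact div_le_one_of_le₀ hba (abs_nonneg a)
  have hcore := mul_one_sub_le_one_sub_abs_rpow_mul_self hm1 hm2
    (neg_le_of_abs_le ht) (le_of_abs_le ht)
  have hscale : |b| ^ (m - 2) = |t| ^ (m - 2) * |a| ^ (m - 2) := by
    rw [hb, abs_mul, mul_rpow (abs_nonneg t) (abs_nonneg a)]
  have hweight : 0 ≤ (1 - t) * (|a| ^ (m - 2) * a ^ 2) := by
    have : t ≤ 1 := le_of_abs_le ht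
    have : 0 ≤ |a| ^ (m - 2) := rpow_nonneg (abs_nonneg a) _
    positivity
  rw [hscale, hb]
  linear_combination mul_le_mul_of_nonneg_right hcore hweight

lemma mul_sq_mul_max_rpow_le {m : ℝ} (hm1 : 1 < m) (hm2 : m ≤ 2) (a b : ℝ) :
    (m - 1) * (a - b) ^ 2 * max |a| |b| ^ (m - 2)
      ≤ (|a| ^ (m - 2) * a - |b| ^ (m - 2) * b) * (a - b) := by
  rcases le_total |b| |a| with h | h
  · rw [max_eq_left h]
    exact mul_sq_mul_abs_rpow_le_of_abs_le hm1 hm2 h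
  · rw [max_eq_right h]
    linarith [mul_sq_mul_abs_rpow_le_of_abs_le hm1 hm2 h]

lemma max_rpow_le_add_rpow {m : ℝ} (a b : ℝ) :
    max |a| |b| ^ m ≤ |a| ^ m + |b| ^ m := by
  have := rpow_nonneg (abs_nonneg a) m
  have := rpow_nonneg (abs_nonneg b) m
  rcases le_total |b| |a| with h | h
  · rw [max_eq_left h]; linarith
  · rw [max_eq_right h]; linarith

lemma abs_rpow_le_of_mul_sq_mul_rpow_le {m c x M D S : ℝ} (hm0 : 0 ≤ m) (hm2 : m ≤ 2)
    (hc : 0 < c) (hM : 0 < M) (hD : c * x ^ 2 * M ^ (m - 2) ≤ D) (hS : M ^ m ≤ S) :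
    |x| ^ m ≤ c ^ (-(m / 2)) * D ^ (m / 2) * S ^ ((2 - m) / 2) := by
  have hsq : (x ^ 2) ^ (m / 2) = |x| ^ m := by
    rw [← sq_abs, ← rpow_natCast, ← rpow_mul (abs_nonneg x)]
    congr 1
    ring
  have hM_cancel : (M ^ (m - 2)) ^ (m / 2) * (M ^ m) ^ ((2 - m) / 2) = 1 := by
    rw [← rpow_mul hM.le, ← rpow_mul hM.le, ← rpow_add hM]
    ring_nf
    exact rpow_zero M
  have hc_cancel : c ^ (-(m / 2)) * c ^ (m / 2) = 1 := by
    rw [← rpow_add hc, neg_add_cancel, rpow_zero]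
  have hlower : 0 ≤ c * x ^ 2 * M ^ (m - 2) := by
    have := rpow_pos_of_pos hM (m - 2)
    positivity
  have hD0 : 0 ≤ D := hlower.trans hD
  calc |x| ^ m
      = c ^ (-(m / 2)) * (c * x ^ 2 * M ^ (m - 2)) ^ (m / 2) * (M ^ m) ^ ((2 - m) / 2) := by
        rw [mul_rpow (by positivity) (rpow_nonneg hM.le _), mul_rpow hc.le (sq_nonneg x), hsq]
        linear_combination (-(|x| ^ m * c ^ (-(m / 2)) * c ^ (m / 2))) * hM_cancel
          - |x| ^ m * hc_cancel
    _ ≤ c ^ (-(m / 2)) * D ^ (m / 2) * S ^ ((2 - m) / 2) := by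
        gcongr

theorem stmt_5 (m : ℝ) (hm1 : 1 < m) (hm2 : m < 2) :
    ∃ C : ℝ, 0 < C ∧ ∀ a b : ℝ,
      |a - b| ^ m ≤ C * ((|a| ^ (m - 2) * a - |b| ^ (m - 2) * b) * (a - b)) ^ (m / 2)
        * (|a| ^ m + |b| ^ m) ^ ((2 - m) / 2) := by
  have hm0 : 0 < m - 1 := by linarith
  refine ⟨(m - 1) ^ (-(m / 2)), rpow_pos_of_pos hm0 _, fun a b => ?_⟩
  rcases eq_or_ne a b with rfl | hab
  · simp [zero_rpow (by linarith : m ≠ 0), zero_rpow (by linarith : m / 2 ≠ 0)]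
  have hM : 0 < max |a| |b| := by
    by_contra! h
    have ha : a = 0 := abs_nonpos_iff.1 ((le_max_left _ _).trans h)
    have hb : b = 0 := abs_nonpos_iff.1 ((le_max_right _ _).trans h)
    exact hab (ha.trans hb.symm)
  exact abs_rpow_le_of_mul_sq_mul_rpow_le (by linarith) hm2.le hm0 hM
    (mul_sq_mul_max_rpow_le hm1 hm2.le a b) (max_rpow_le_add_rpow a b)
end
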